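/- Let X be a nonempty set, n ≥ 1, and for each p ∈ Fin n let d_p : X × X → ℝ be a pseudometric (nonnegative, zero on the diagonal, symmetric, satisfying the triangle inequality). Define d_max(x,y) = max_p d_p(x,y) and d_min(x,y) = min_p d_p(x,y), and assume X is sequentially compact with respect to d_max (every sequence in X has a subsequence (x_k) and a point x̂ with d_max(x_k, x̂) → 0). Let A, B ⊆ X be nonempty with inf{d_min(a,b) : a ∈ A, b ∈ B} = 0. Then there exist sequences (a_k) in A and (b_k) in B and points â, b̂ ∈ X such that d_min(a_k, â) → 0, d_min(b_k, b̂) → 0, and d_min(â, b̂) = 0. -/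

import Mathlib

/-- The pointwise maximum of a finite family of distance functions. -/
noncomputable def famMax {X : Type*} {n : ℕ} (hn : 1 ≤ n)
    (d : Fin n → X → X → ℝ) (x y : X) : ℝ :=
  Finset.univ.sup' (Finset.univ_nonempty_iff.mpr ⟨⟨0, hn⟩⟩) (fun p => d p x y)

/-- The pointwise minimum of a finite family of distance functions. -/
noncomputable def famMin {X : Type*} {n : ℕ} (hn : 1 ≤ n)
    (d : Fin n → X → X → ℝ) (x y : X) : ℝ :=
  Finset.univ.inf' (Finset.univ_nonempty_iff.mpr ⟨⟨0, hn⟩⟩) (fun p => d p x y)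

/-!
Choose pairs `(a_k, b_k) ∈ A × B` with `d_min(a_k, b_k) → 0` and pass twice to a subsequence so
that `a_k → â` and `b_k → b̂` in `d_max`; this is stronger than convergence in `d_min`. The
triangle inequality fails for `d_min`, but it holds for the single `d_p` realising
`d_min(a_k, b_k)`, which gives `d_min(â, b̂) ≤ d_max(a_k, â) + d_min(a_k, b_k) + d_max(b_k, b̂) → 0`.
-/

open Filter Topology

section FiniteFamily

variable {X : Type*} {n : ℕ} (hn : 1 ≤ n) {d : Fin n → X → X → ℝ}

theorem famMin_le (p : Fin n) (x y : X) : famMin hn d x y ≤ d p x y :=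
  Finset.inf'_le _ (Finset.mem_univ p)

theorem le_famMax (p : Fin n) (x y : X) : d p x y ≤ famMax hn d x y :=
  Finset.le_sup' (fun q => d q x y) (Finset.mem_univ p)

theorem famMin_le_famMax (x y : X) : famMin hn d x y ≤ famMax hn d x y :=
  (famMin_le hn ⟨0, hn⟩ x y).trans (le_famMax hn ⟨0, hn⟩ x y)

theorem famMin_nonneg (hnonneg : ∀ p x y, 0 ≤ d p x y) (x y : X) : 0 ≤ famMin hn d x y :=
  Finset.le_inf' _ _ fun p _ => hnonneg p x y

theorem famMin_le_famMax_add_famMin_add_famMax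
    (hsymm : ∀ p x y, d p x y = d p y x) (htri : ∀ p x y z, d p x z ≤ d p x y + d p y z)
    (x y x' y' : X) :
    famMin hn d x' y' ≤ famMax hn d x x' + famMin hn d x y + famMax hn d y y' := by
  obtain ⟨p, -, hp⟩ := Finset.exists_mem_eq_inf' (Finset.univ_nonempty_iff.mpr ⟨⟨0, hn⟩⟩)
    (fun p => d p x y)
  have hmin : famMin hn d x y = d p x y := hp
  calc famMin hn d x' y' ≤ d p x' y' := famMin_le hn p x' y'
    _ ≤ d p x' x + d p x y + d p y y' :=
        (htri p x' y y').trans (add_le_add_left (htri p x' x y) _)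
    _ ≤ famMax hn d x x' + famMin hn d x y + famMax hn d y y' := by
        rw [hmin, hsymm p x' x]
        gcongr <;> exact le_famMax hn p _ _

theorem tendsto_famMin_of_tendsto_famMax (hnonneg : ∀ p x y, 0 ≤ d p x y)
    {u : ℕ → X} {x : X} (hu : Tendsto (fun k => famMax hn d (u k) x) atTop (𝓝 0)) :
    Tendsto (fun k => famMin hn d (u k) x) atTop (𝓝 0) :=
  squeeze_zero (fun _ => famMin_nonneg hn hnonneg _ _) (fun _ => famMin_le_famMax hn _ _) hu

theorem famMin_eq_zero_of_tendsto (hnonneg : ∀ p x y, 0 ≤ d p x y)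
    (hsymm : ∀ p x y, d p x y = d p y x) (htri : ∀ p x y z, d p x z ≤ d p x y + d p y z)
    {a b : ℕ → X} {ahat bhat : X}
    (ha : Tendsto (fun k => famMax hn d (a k) ahat) atTop (𝓝 0))
    (hb : Tendsto (fun k => famMax hn d (b k) bhat) atTop (𝓝 0))
    (hab : Tendsto (fun k => famMin hn d (a k) (b k)) atTop (𝓝 0)) :
    famMin hn d ahat bhat = 0 := by
  have hsum := (ha.add hab).add hb
  rw [add_zero, add_zero] at hsum
  exact le_antisymm
    (ge_of_tendsto' hsum fun k =>
      famMin_le_famMax_add_famMin_add_famMax hn hsymm htri (a k) (b k) ahat bhat)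
    (famMin_nonneg hn hnonneg ahat bhat)

end FiniteFamily

theorem exists_seq_tendsto_zero_of_sInf_eq_zero {α β : Type*} {f : α → β → ℝ}
    (hf : ∀ a b, 0 ≤ f a b) {A : Set α} {B : Set β} (hA : A.Nonempty) (hB : B.Nonempty)
    (hinf : sInf {r : ℝ | ∃ a ∈ A, ∃ b ∈ B, f a b = r} = 0) :
    ∃ (a : ℕ → α) (b : ℕ → β), (∀ k, a k ∈ A) ∧ (∀ k, b k ∈ B) ∧
      Tendsto (fun k => f (a k) (b k)) atTop (𝓝 0) := by
  obtain ⟨a₀, ha₀⟩ := hA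
  obtain ⟨b₀, hb₀⟩ := hB
  obtain ⟨u, -, hu, hmem⟩ := exists_seq_tendsto_sInf (S := {r : ℝ | ∃ a ∈ A, ∃ b ∈ B, f a b = r})
    ⟨_, a₀, ha₀, b₀, hb₀, rfl⟩ ⟨0, by rintro _ ⟨a, -, b, -, rfl⟩; exact hf a b⟩
  choose a ha b hb hab using hmem
  refine ⟨a, b, ha, hb, ?_⟩
  simpa only [hab, hinf] using hu

theorem exists_strictMono_tendsto_pair {X : Type*} {D : X → X → ℝ}
    (hseq : ∀ x : ℕ → X, ∃ φ : ℕ → ℕ, StrictMono φ ∧ ∃ xhat : X,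
      Tendsto (fun k => D (x (φ k)) xhat) atTop (𝓝 0))
    (a b : ℕ → X) :
    ∃ φ : ℕ → ℕ, StrictMono φ ∧ ∃ ahat bhat : X,
      Tendsto (fun k => D (a (φ k)) ahat) atTop (𝓝 0) ∧
      Tendsto (fun k => D (b (φ k)) bhat) atTop (𝓝 0) := by
  obtain ⟨φ, hφ, ahat, ha⟩ := hseq a
  obtain ⟨ψ, hψ, bhat, hb⟩ := hseq (b ∘ φ)
  exact ⟨φ ∘ ψ, hφ.comp hψ, ahat, bhat, ha.comp hψ.tendsto_atTop, hb⟩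

theorem min_set_distance_zero_limits_general {X : Type*} {n : ℕ}
    (hn : 1 ≤ n) (d : Fin n → X → X → ℝ)
    (hnonneg : ∀ p x y, 0 ≤ d p x y)
    (hsymm : ∀ p x y, d p x y = d p y x)
    (htri : ∀ p x y z, d p x z ≤ d p x y + d p y z)
    (hseq : ∀ x : ℕ → X, ∃ φ : ℕ → ℕ, StrictMono φ ∧ ∃ xhat : X,
      Filter.Tendsto (fun k => famMax hn d (x (φ k)) xhat) Filter.atTop (nhds 0))
    (A B : Set X) (hA : A.Nonempty) (hB : B.Nonempty)
    (hinf : sInf {r : ℝ | ∃ a ∈ A, ∃ b ∈ B, famMin hn d a b = r} = 0) :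
    ∃ (a b : ℕ → X) (ahat bhat : X),
      (∀ k, a k ∈ A) ∧ (∀ k, b k ∈ B) ∧
      Filter.Tendsto (fun k => famMin hn d (a k) ahat) Filter.atTop (nhds 0) ∧
      Filter.Tendsto (fun k => famMin hn d (b k) bhat) Filter.atTop (nhds 0) ∧
      famMin hn d ahat bhat = 0 := by
  obtain ⟨a, b, ha, hb, hab⟩ :=
    exists_seq_tendsto_zero_of_sInf_eq_zero (famMin_nonneg hn hnonneg) hA hB hinf
  obtain ⟨φ, hφ, ahat, bhat, hac, hbc⟩ := exists_strictMono_tendsto_pair hseq a b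
  exact ⟨a ∘ φ, b ∘ φ, ahat, bhat, fun k => ha (φ k), fun k => hb (φ k),
    tendsto_famMin_of_tendsto_famMax hn hnonneg hac,
    tendsto_famMin_of_tendsto_famMax hn hnonneg hbc,
    famMin_eq_zero_of_tendsto hn hnonneg hsymm htri hac hbc (hab.comp hφ.tendsto_atTop)⟩

/-- Set-distance condition for the minimum distance of a finite family of
pseudometrics: if `X` is sequentially compact w.r.t. `d_max` and nonempty sets
`A`, `B` satisfy `inf{d_min(a,b) | a ∈ A, b ∈ B} = 0`, then there are sequences
in `A` and `B` converging (w.r.t. `d_min`) to points `â`, `b̂` with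
`d_min(â,b̂) = 0`. -/
theorem min_set_distance_zero_limits {X : Type*} [Nonempty X] {n : ℕ}
    (hn : 1 ≤ n) (d : Fin n → X → X → ℝ)
    (hnonneg : ∀ p x y, 0 ≤ d p x y)
    (hrefl : ∀ p x, d p x x = 0)
    (hsymm : ∀ p x y, d p x y = d p y x)
    (htri : ∀ p x y z, d p x z ≤ d p x y + d p y z)
    (hseq : ∀ x : ℕ → X, ∃ φ : ℕ → ℕ, StrictMono φ ∧ ∃ xhat : X,
      Filter.Tendsto (fun k => famMax hn d (x (φ k)) xhat) Filter.atTop (nhds 0))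
    (A B : Set X) (hA : A.Nonempty) (hB : B.Nonempty)
    (hinf : sInf {r : ℝ | ∃ a ∈ A, ∃ b ∈ B, famMin hn d a b = r} = 0) :
    ∃ (a b : ℕ → X) (ahat bhat : X),
      (∀ k, a k ∈ A) ∧ (∀ k, b k ∈ B) ∧
      Filter.Tendsto (fun k => famMin hn d (a k) ahat) Filter.atTop (nhds 0) ∧
      Filter.Tendsto (fun k => famMin hn d (b k) bhat) Filter.atTop (nhds 0) ∧
      famMin hn d ahat bhat = 0 :=
  min_set_distance_zero_limits_general hn d hnonneg hsymm htri hseq A B hA hB hinf
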